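/- Let $A$ be a bialgebra, $H$ a Hopf algebra, and $\sigma : H \to A$ a bialgebra monomorphism. If $\gamma : A\otimes A \to K$ is an $H$-bilinear unital 2-cocycle for $A$ (i.e. $\gamma(\sigma(h)x \otimes y\sigma(h')) = \varepsilon(h)\gamma(x\otimes y)\varepsilon(h')$), then: (i) $\gamma$ is $H$-balanced, i.e. $\gamma(x\sigma(h)\otimes y) = \gamma(x\otimes \sigma(h)y)$ for all $x,y\in A$, $h\in H$; and (ii) the convolution inverse $\gamma^{-1}$ is also $H$-bilinear and $H$-balanced. -/

import Mathlib

open TensorProduct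

variable {K A H : Type*}

section Defs

variable [CommRing K] [Ring A] [Bialgebra K A]

/-- The comultiplication of the tensor product coalgebra `A ⊗ A`. -/
noncomputable def comul2 : (A ⊗[K] A) →ₗ[K] (A ⊗[K] A) ⊗[K] (A ⊗[K] A) :=
  (TensorProduct.tensorTensorTensorComm K A A A A).toLinearMap ∘ₗ
    (TensorProduct.map Coalgebra.comul Coalgebra.comul)

/-- The counit of the tensor product coalgebra `A ⊗ A`. -/
noncomputable def counit2 : (A ⊗[K] A) →ₗ[K] K :=
  (TensorProduct.lid K K).toLinearMap ∘ₗ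
    (TensorProduct.map Coalgebra.counit Coalgebra.counit)

/-- The comultiplication of the tensor product coalgebra `A ⊗ (A ⊗ A)`. -/
noncomputable def comul3 : (A ⊗[K] (A ⊗[K] A)) →ₗ[K]
    (A ⊗[K] (A ⊗[K] A)) ⊗[K] (A ⊗[K] (A ⊗[K] A)) :=
  (TensorProduct.tensorTensorTensorComm K A A (A ⊗[K] A) (A ⊗[K] A)).toLinearMap ∘ₗ
    (TensorProduct.map Coalgebra.comul comul2)

/-- Convolution product on linear maps `A ⊗ A → K`. -/
noncomputable def conv2 (f g : (A ⊗[K] A) →ₗ[K] K) : (A ⊗[K] A) →ₗ[K] K :=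
  (TensorProduct.lid K K).toLinearMap ∘ₗ (TensorProduct.map f g) ∘ₗ comul2

/-- Convolution product on linear maps `A ⊗ (A ⊗ A) → K`. -/
noncomputable def conv3 (f g : (A ⊗[K] (A ⊗[K] A)) →ₗ[K] K) :
    (A ⊗[K] (A ⊗[K] A)) →ₗ[K] K :=
  (TensorProduct.lid K K).toLinearMap ∘ₗ (TensorProduct.map f g) ∘ₗ comul3

/-- The 2-cocycle equation for `γ` for the bialgebra `A`:
`γ(y₁ ⊗ z₁) γ(x ⊗ y₂z₂) = γ(x₁ ⊗ y₁) γ(x₂y₂ ⊗ z)`, in convolution form. -/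
noncomputable def IsCocycleEq (γ : (A ⊗[K] A) →ₗ[K] K) : Prop :=
  conv3 ((TensorProduct.lid K K).toLinearMap ∘ₗ TensorProduct.map Coalgebra.counit γ)
      (γ ∘ₗ TensorProduct.map LinearMap.id (LinearMap.mul' K A)) =
    conv3 (((TensorProduct.lid K K).toLinearMap ∘ₗ TensorProduct.map γ Coalgebra.counit)
        ∘ₗ (TensorProduct.assoc K A A A).symm.toLinearMap)
      ((γ ∘ₗ TensorProduct.map (LinearMap.mul' K A) LinearMap.id) ∘ₗ
        (TensorProduct.assoc K A A A).symm.toLinearMap)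

/-- The normalization condition `γ(x ⊗ 1) = γ(1 ⊗ x) = ε(x)`. -/
def IsUnital (γ : (A ⊗[K] A) →ₗ[K] K) : Prop :=
  ∀ x : A, γ (x ⊗ₜ[K] (1 : A)) = Coalgebra.counit (R := K) x ∧
    γ ((1 : A) ⊗ₜ[K] x) = Coalgebra.counit (R := K) x

end Defs

/-!
Precomposition with a coalgebra map is multiplicative for the convolution product. Both
`H`-bilinearity and `H`-balancedness of a form `γ` on `A ⊗ A` say that `γ` takes the same value after
precomposition with two coalgebra maps into `A ⊗ A` (built from `σ`, the multiplication and the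
counit), so both properties pass to the convolution inverse by uniqueness of inverses.
Balancedness of `γ` itself comes from the cocycle identity precomposed with `id ⊗ σ ⊗ id`: by
bilinearity and unitality the left convolution factor on both sides becomes the counit, and
what remains is `γ(x ⊗ σ(h)y) = γ(xσ(h) ⊗ y)`.
-/

theorem TensorProduct.lid_self_eq_mul' {R : Type*} [CommSemiring R] :
    (TensorProduct.lid R R).toLinearMap = LinearMap.mul' R R := by
  ext; simp

namespace LinearMap

open WithConv

variable {R C D : Type*} [CommSemiring R] [Semiring A] [Algebra R A]
  [AddCommMonoid C] [Module R C] [Coalgebra R C] [AddCommMonoid D] [Module R D] [Coalgebra R D]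

variable (A) in
noncomputable def convCompCoalgHom (φ : C →ₗc[R] D) :
    WithConv (D →ₗ[R] A) →* WithConv (C →ₗ[R] A) where
  toFun f := toConv (f.ofConv ∘ₗ φ.toLinearMap)
  map_one' := by ext; simp
  map_mul' f g := congrArg toConv (convMul_comp_coalgHom_distrib f g φ)

@[simp]
theorem convCompCoalgHom_apply (φ : C →ₗc[R] D) (f : WithConv (D →ₗ[R] A)) (c : C) :
    convCompCoalgHom A φ f c = f (φ c) := rfl

theorem convCompCoalgHom_eq_of_inverse {f g : WithConv (D →ₗ[R] A)} (hfg : f * g = 1)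
    (hgf : g * f = 1) {φ ψ : C →ₗc[R] D}
    (h : convCompCoalgHom A φ f = convCompCoalgHom A ψ f) :
    convCompCoalgHom A φ g = convCompCoalgHom A ψ g :=
  left_inv_eq_right_inv (a := convCompCoalgHom A φ f)
    (by rw [← map_mul, hgf, map_one]) (by rw [h, ← map_mul, hfg, map_one])

end LinearMap

namespace Coalgebra

open Coalgebra.TensorProduct

variable (R C M : Type*) [CommSemiring R] [AddCommMonoid C] [Module R C] [Coalgebra R C]
  [AddCommMonoid M] [Module R M] [Coalgebra R M]

noncomputable def counitSMulLeft : C ⊗[R] M →ₗc[R] M :=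
  (Coalgebra.TensorProduct.lid R M).toCoalgHom.comp (map (counitCoalgHom R C) (CoalgHom.id R M))

noncomputable def counitSMulRight : M ⊗[R] C →ₗc[R] M :=
  (Coalgebra.TensorProduct.rid R R M).toCoalgHom.comp (map (CoalgHom.id R M) (counitCoalgHom R C))

variable {R C M}

@[simp]
theorem counitSMulLeft_tmul (c : C) (x : M) :
    counitSMulLeft R C M (c ⊗ₜ x) = counit (R := R) c • x := rfl

@[simp]
theorem counitSMulRight_tmul (x : M) (c : C) :
    counitSMulRight R C M (x ⊗ₜ c) = counit (R := R) c • x := rfl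

end Coalgebra

section Convolution

open WithConv

variable [CommRing K] [Ring A] [Bialgebra K A]

theorem conv2_eq_convMul (f g : (A ⊗[K] A) →ₗ[K] K) :
    conv2 f g = (toConv f * toConv g).ofConv := by
  rw [conv2, TensorProduct.lid_self_eq_mul']
  rfl

theorem conv3_eq_convMul (f g : (A ⊗[K] (A ⊗[K] A)) →ₗ[K] K) :
    conv3 f g = (toConv f * toConv g).ofConv := by
  rw [conv3, TensorProduct.lid_self_eq_mul']
  rfl

theorem counit2_eq_convOne :
    counit2 (K := K) (A := A) = (1 : WithConv ((A ⊗[K] A) →ₗ[K] K)).ofConv := by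
  ext a b
  simp [counit2, mul_comm]

theorem conv2_eq_counit2_iff {f g : (A ⊗[K] A) →ₗ[K] K} :
    conv2 f g = counit2 ↔ toConv f * toConv g = 1 := by
  rw [conv2_eq_convMul, counit2_eq_convOne, ofConv_injective.eq_iff]

end Convolution

namespace BialgHom

open Coalgebra Coalgebra.TensorProduct LinearMap WithConv

section Semiring

variable [CommSemiring K] [Semiring A] [Bialgebra K A] [Semiring H] [Bialgebra K H]

noncomputable def mulLeftCoalgHom (σ : H →ₐc[K] A) : H ⊗[K] A →ₗc[K] A :=
  (Bialgebra.mulCoalgHom K A).comp (map (σ : H →ₗc[K] A) (CoalgHom.id K A))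

noncomputable def mulRightCoalgHom (σ : H →ₐc[K] A) : A ⊗[K] H →ₗc[K] A :=
  (Bialgebra.mulCoalgHom K A).comp (map (CoalgHom.id K A) (σ : H →ₗc[K] A))

@[simp]
theorem mulLeftCoalgHom_tmul (σ : H →ₐc[K] A) (h : H) (x : A) :
    σ.mulLeftCoalgHom (h ⊗ₜ x) = σ h * x := rfl

@[simp]
theorem mulRightCoalgHom_tmul (σ : H →ₐc[K] A) (x : A) (h : H) :
    σ.mulRightCoalgHom (x ⊗ₜ h) = x * σ h := rfl

def IsBilinear (σ : H →ₐc[K] A) (γ : A ⊗[K] A →ₗ[K] K) : Prop :=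
  ∀ (h h' : H) (x y : A), γ ((σ h * x) ⊗ₜ[K] (y * σ h')) =
    counit (R := K) h * γ (x ⊗ₜ[K] y) * counit (R := K) h'

def IsBalanced (σ : H →ₐc[K] A) (γ : A ⊗[K] A →ₗ[K] K) : Prop :=
  ∀ (h : H) (x y : A), γ ((x * σ h) ⊗ₜ[K] y) = γ (x ⊗ₜ[K] (σ h * y))

theorem isBilinear_iff_convCompCoalgHom (σ : H →ₐc[K] A) (γ : A ⊗[K] A →ₗ[K] K) :
    σ.IsBilinear γ ↔
      convCompCoalgHom K (map σ.mulLeftCoalgHom σ.mulRightCoalgHom) (toConv γ) =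
        convCompCoalgHom K (map (counitSMulLeft K H A) (counitSMulRight K H A)) (toConv γ) := by
  rw [WithConv.ext_iff]
  refine ⟨fun hγ ↦ ?_, fun hγ h h' x y ↦ ?_⟩
  · ext h x y h'
    simp [← TensorProduct.smul_tmul', hγ h h' x y]
    ring
  · have hγ' := congr($hγ ((h ⊗ₜ x) ⊗ₜ (y ⊗ₜ h')))
    simp only [convCompCoalgHom_apply, Coalgebra.TensorProduct.map_tmul, mulLeftCoalgHom_tmul,
      mulRightCoalgHom_tmul, counitSMulLeft_tmul, counitSMulRight_tmul,
      ← TensorProduct.smul_tmul', TensorProduct.tmul_smul, map_smul, smul_eq_mul] at hγ'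
    rw [hγ']
    ring

theorem isBalanced_iff_convCompCoalgHom (σ : H →ₐc[K] A) (γ : A ⊗[K] A →ₗ[K] K) :
    σ.IsBalanced γ ↔
      convCompCoalgHom K ((map σ.mulRightCoalgHom (CoalgHom.id K A)).comp
          (Coalgebra.TensorProduct.assoc K K A H A).symm.toCoalgHom) (toConv γ) =
        convCompCoalgHom K (map (CoalgHom.id K A) σ.mulLeftCoalgHom) (toConv γ) := by
  rw [WithConv.ext_iff]
  refine ⟨fun hγ ↦ ?_, fun hγ h x y ↦ by simpa using congr($hγ (x ⊗ₜ (h ⊗ₜ y)))⟩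
  ext x h y
  simpa using hγ h x y

variable {σ : H →ₐc[K] A} {γ γinv : A ⊗[K] A →ₗ[K] K}

theorem IsBilinear.of_convInverse (hγ : σ.IsBilinear γ) (hγγinv : toConv γ * toConv γinv = 1)
    (hγinvγ : toConv γinv * toConv γ = 1) : σ.IsBilinear γinv :=
  (isBilinear_iff_convCompCoalgHom σ γinv).2 <|
    convCompCoalgHom_eq_of_inverse hγγinv hγinvγ ((isBilinear_iff_convCompCoalgHom σ γ).1 hγ)

theorem IsBalanced.of_convInverse (hγ : σ.IsBalanced γ) (hγγinv : toConv γ * toConv γinv = 1)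
    (hγinvγ : toConv γinv * toConv γ = 1) : σ.IsBalanced γinv :=
  (isBalanced_iff_convCompCoalgHom σ γinv).2 <|
    convCompCoalgHom_eq_of_inverse hγγinv hγinvγ ((isBalanced_iff_convCompCoalgHom σ γ).1 hγ)

end Semiring

variable [CommRing K] [Ring A] [Bialgebra K A] [Semiring H] [Bialgebra K H]
  {σ : H →ₐc[K] A} {γ : A ⊗[K] A →ₗ[K] K}

theorem IsBilinear.apply_map_tmul (hγ : σ.IsBilinear γ) (hγu : IsUnital γ) (h : H) (y : A) :
    γ (σ h ⊗ₜ y) = counit (R := K) h * counit (R := K) y := by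
  simpa [(hγu y).2] using hγ h 1 1 y

theorem IsBilinear.apply_tmul_map (hγ : σ.IsBilinear γ) (hγu : IsUnital γ) (x : A) (h : H) :
    γ (x ⊗ₜ σ h) = counit (R := K) x * counit (R := K) h := by
  simpa [(hγu x).1, mul_comm] using hγ 1 h x 1

theorem IsBilinear.isBalanced (hγ : σ.IsBilinear γ) (hγu : IsUnital γ)
    (hγc : IsCocycleEq γ) : σ.IsBalanced γ := by
  let Θ : A ⊗[K] (H ⊗[K] A) →ₗc[K] A ⊗[K] (A ⊗[K] A) :=
    map (CoalgHom.id K A) (map (σ : H →ₗc[K] A) (CoalgHom.id K A))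
  have hleft : convCompCoalgHom K Θ (toConv ((TensorProduct.lid K K).toLinearMap ∘ₗ
      TensorProduct.map counit γ)) = 1 := by
    ext x h y
    simp [Θ, hγ.apply_map_tmul hγu]
    ring
  have hright : convCompCoalgHom K Θ (toConv (((TensorProduct.lid K K).toLinearMap ∘ₗ
      TensorProduct.map γ counit) ∘ₗ (TensorProduct.assoc K A A A).symm.toLinearMap)) = 1 := by
    ext x h y
    simp [Θ, hγ.apply_tmul_map hγu]
    ring
  rw [IsCocycleEq, conv3_eq_convMul, conv3_eq_convMul, ofConv_injective.eq_iff] at hγc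
  have hΘ := congrArg (convCompCoalgHom K Θ) hγc
  rw [map_mul, map_mul, hleft, hright, one_mul, one_mul] at hΘ
  intro h x y
  simpa [Θ] using congr($hΘ (x ⊗ₜ (h ⊗ₜ y))).symm

end BialgHom

open WithConv in
theorem hbilinear_cocycle_balanced_general [CommRing K] [Ring A] [Bialgebra K A]
    [Ring H] [HopfAlgebra K H] (σ : H →ₐc[K] A)
    (γ γinv : (A ⊗[K] A) →ₗ[K] K)
    (hγc : IsCocycleEq γ) (hγu : IsUnital γ)
    (hγinv₁ : conv2 γ γinv = counit2) (hγinv₂ : conv2 γinv γ = counit2)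
    (hbil : ∀ (h h' : H) (x y : A),
      γ ((σ h * x) ⊗ₜ[K] (y * σ h')) =
        Coalgebra.counit (R := K) h * γ (x ⊗ₜ[K] y) * Coalgebra.counit (R := K) h') :
    (∀ (h : H) (x y : A), γ ((x * σ h) ⊗ₜ[K] y) = γ (x ⊗ₜ[K] (σ h * y))) ∧
    (∀ (h h' : H) (x y : A),
      γinv ((σ h * x) ⊗ₜ[K] (y * σ h')) =
        Coalgebra.counit (R := K) h * γinv (x ⊗ₜ[K] y) *
          Coalgebra.counit (R := K) h') ∧
    (∀ (h : H) (x y : A), γinv ((x * σ h) ⊗ₜ[K] y) = γinv (x ⊗ₜ[K] (σ h * y))) := by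
  have hγ : σ.IsBilinear γ := hbil
  have hγγinv : toConv γ * toConv γinv = 1 := conv2_eq_counit2_iff.1 hγinv₁
  have hγinvγ : toConv γinv * toConv γ = 1 := conv2_eq_counit2_iff.1 hγinv₂
  have hbal : σ.IsBalanced γ := hγ.isBalanced hγu hγc
  exact ⟨hbal, hγ.of_convInverse hγγinv hγinvγ, hbal.of_convInverse hγγinv hγinvγ⟩

/-- Let `σ : H → A` be a bialgebra monomorphism from a Hopf algebra `H`
to a bialgebra `A`, and let `γ` be an `H`-bilinear unital 2-cocycle for `A`, with
convolution inverse `γinv`. Then (i) `γ` is `H`-balanced and (ii) `γ⁻¹` is also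
`H`-bilinear and `H`-balanced. -/
theorem hbilinear_cocycle_balanced [CommRing K] [Ring A] [Bialgebra K A]
    [Ring H] [HopfAlgebra K H] (σ : H →ₐc[K] A) (hσ : Function.Injective σ)
    (γ γinv : (A ⊗[K] A) →ₗ[K] K)
    (hγc : IsCocycleEq γ) (hγu : IsUnital γ)
    (hγinv₁ : conv2 γ γinv = counit2) (hγinv₂ : conv2 γinv γ = counit2)
    (hbil : ∀ (h h' : H) (x y : A),
      γ ((σ h * x) ⊗ₜ[K] (y * σ h')) =
        Coalgebra.counit (R := K) h * γ (x ⊗ₜ[K] y) * Coalgebra.counit (R := K) h') :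
    (∀ (h : H) (x y : A), γ ((x * σ h) ⊗ₜ[K] y) = γ (x ⊗ₜ[K] (σ h * y))) ∧
    (∀ (h h' : H) (x y : A),
      γinv ((σ h * x) ⊗ₜ[K] (y * σ h')) =
        Coalgebra.counit (R := K) h * γinv (x ⊗ₜ[K] y) *
          Coalgebra.counit (R := K) h') ∧
    (∀ (h : H) (x y : A), γinv ((x * σ h) ⊗ₜ[K] y) = γinv (x ⊗ₜ[K] (σ h * y))) :=
  hbilinear_cocycle_balanced_general σ γ γinv hγc hγu hγinv₁ hγinv₂ hbil
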